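/- Write N ≥ 1 as N = 2^n K with K odd and n ≥ 0. Then the N-th letter of ξ is a if n = 0 and is l_n if n ≥ 1. In particular, ξ_N = a if and only if N is odd. -/
import Mathlib


inductive A : Type
  | a | b | c | d
deriving DecidableEq

def subst : A → List A
  | A.a => [A.a, A.c, A.a]
  | A.b => [A.d]
  | A.c => [A.b]
  | A.d => [A.c]

def substW (u : List A) : List A := u.flatMap subst

def wrd (n : ℕ) : List A := substW^[n - 1] [A.a]

def ltr (n : ℕ) : List A := substW^[n - 1] [A.c]

def seg (ξ : ℕ → A) (s m : ℕ) : List A := (List.range m).map fun i => ξ (s + 1 + i)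

def IsFixed (ξ : ℕ → A) : Prop :=
  ∀ N : ℕ, seg ξ 0 ((substW (seg ξ 0 N)).length) = substW (seg ξ 0 N)
def nxt : A → A
  | A.a => A.c | A.b => A.d | A.c => A.b | A.d => A.c

lemma nxt_ne_a (x : A) : nxt x ≠ A.a := by cases x <;> simp [nxt]

lemma subst_ne_a (x : A) (h : x ≠ A.a) : subst x = [nxt x] := by
  cases x <;> simp_all [subst, nxt]

lemma seg_length (ξ : ℕ → A) (m : ℕ) : (seg ξ 0 m).length = m := by simp [seg]

lemma seg_getElem (ξ : ℕ → A) (m i : ℕ) (h : i < m) :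
    (seg ξ 0 m)[i]'(by simpa [seg] using h) = ξ (i + 1) := by
  simp [seg]
  congr 1
  omega

lemma seg_succ (ξ : ℕ → A) (m : ℕ) : seg ξ 0 (m + 1) = seg ξ 0 m ++ [ξ (m + 1)] := by
  simp [seg, List.range_succ]
  congr 1
  omega

lemma substW_seg_succ (ξ : ℕ → A) (k : ℕ) :
    substW (seg ξ 0 (k + 1)) = substW (seg ξ 0 k) ++ subst (ξ (k + 1)) := by
  rw [seg_succ, substW, List.flatMap_append]
  simp [substW]

def Lf (ξ : ℕ → A) (k : ℕ) : ℕ := (substW (seg ξ 0 k)).length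

lemma Lf_succ (ξ : ℕ → A) (k : ℕ) :
    Lf ξ (k + 1) = Lf ξ k + (subst (ξ (k + 1))).length := by
  simp [Lf, substW_seg_succ]

lemma ext_lemma (ξ : ℕ → A) (hξ : IsFixed ξ) (k i : ℕ) (h : i < Lf ξ k) :
    (substW (seg ξ 0 k))[i]? = some (ξ (i + 1)) := by
  conv_lhs => rw [← hξ k]
  have h' : i < Lf ξ k := h
  simp [seg, h']
  exact ⟨i, by rw [List.getElem?_range (by simpa [Lf, seg] using h')], by congr 1; omega⟩

lemma blk (ξ : ℕ → A) (hξ : IsFixed ξ) (k j : ℕ) (hj : j < (subst (ξ (k + 1))).length) :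
    (subst (ξ (k + 1)))[j]? = some (ξ (Lf ξ k + j + 1)) := by
  have h : Lf ξ k + j < Lf ξ (k + 1) := by rw [Lf_succ]; omega
  have h2 := ext_lemma ξ hξ (k + 1) (Lf ξ k + j) h
  rw [substW_seg_succ, List.getElem?_append_right (by simp [Lf])] at h2
  simpa [Lf] using h2

lemma xi1 (ξ : ℕ → A) (hξ : IsFixed ξ) : ξ 1 = A.a := by
  have hL0 : Lf ξ 0 = 0 := by simp [Lf, seg, substW]
  have hj : 0 < (subst (ξ 1)).length := by cases h : ξ 1 <;> simp [subst, h]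
  have h2 : (subst (ξ 1))[0]? = some (ξ 1) := by
    have h3 := blk ξ hξ 0 0 hj
    rw [hL0] at h3
    simpa using h3
  cases h : ξ 1 with
  | a => rfl
  | b => rw [h] at h2; simp [subst] at h2
  | c => rw [h] at h2; simp [subst] at h2
  | d => rw [h] at h2; simp [subst] at h2

lemma main_ind (ξ : ℕ → A) (hξ : IsFixed ξ) : ∀ k : ℕ,
    Lf ξ (k + 1) = 2 * (k + 1) + (k + 1) % 2 ∧
    ξ (2 * k + 2) = nxt (ξ (k + 1)) ∧
    (k % 2 = 0 → ξ (2 * k + 1) = A.a ∧ ξ (2 * k + 3) = A.a) := by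
  intro k
  induction k using Nat.strong_induction_on with
  | _ k IH =>
  have hLk : Lf ξ k = 2 * k + k % 2 := by
    rcases k with _ | k0
    · simp [Lf, seg, substW]
    · exact (IH k0 (by omega)).1
  rcases Nat.mod_two_eq_zero_or_one k with hk | hk
  · -- k even
    have ha : ξ (k + 1) = A.a := by
      rcases Nat.eq_zero_or_pos k with rfl | hpos
      · exact xi1 ξ hξ
      · have hkj : k = 2 * (k / 2) := by omega
        have hj1 : 1 ≤ k / 2 := by omega
        rcases Nat.mod_two_eq_zero_or_one (k / 2) with hj2 | hj2
        · have h5 := ((IH (k / 2) (by omega)).2.2 hj2).1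
          rw [show 2 * (k / 2) + 1 = k + 1 from by omega] at h5; exact h5
        · have h5 := ((IH (k / 2 - 1) (by omega)).2.2 (by omega)).2
          rw [show 2 * (k / 2 - 1) + 3 = k + 1 from by omega] at h5; exact h5
    have hsub : subst (ξ (k + 1)) = [A.a, A.c, A.a] := by rw [ha]; rfl
    have hlen : (subst (ξ (k + 1))).length = 3 := by rw [hsub]; rfl
    have b0 := blk ξ hξ k 0 (by omega)
    have b1 := blk ξ hξ k 1 (by omega)
    have b2 := blk ξ hξ k 2 (by omega)
    rw [hsub] at b0 b1 b2
    simp only [List.getElem?_cons_zero, List.getElem?_cons_succ,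
      Option.some.injEq] at b0 b1 b2
    rw [hLk, hk] at b0 b1 b2
    rw [show 2 * k + 0 + 0 + 1 = 2 * k + 1 from by omega] at b0
    rw [show 2 * k + 0 + 1 + 1 = 2 * k + 2 from by omega] at b1
    rw [show 2 * k + 0 + 2 + 1 = 2 * k + 3 from by omega] at b2
    refine ⟨by rw [Lf_succ, hlen]; omega, ?_, fun _ => ⟨b0.symm, b2.symm⟩⟩
    rw [ha, ← b1]; rfl
  · -- k odd
    have hb := (IH (k / 2) (by omega)).2.1
    rw [show 2 * (k / 2) + 2 = k + 1 from by omega] at hb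
    have hne : ξ (k + 1) ≠ A.a := by rw [hb]; exact nxt_ne_a _
    have hsub : subst (ξ (k + 1)) = [nxt (ξ (k + 1))] := subst_ne_a _ hne
    have hlen : (subst (ξ (k + 1))).length = 1 := by rw [hsub]; rfl
    have b0 := blk ξ hξ k 0 (by omega)
    rw [hsub] at b0
    simp only [List.getElem?_cons_zero, Option.some.injEq] at b0
    rw [hLk, hk] at b0
    rw [show 2 * k + 1 + 0 + 1 = 2 * k + 2 from by omega] at b0
    exact ⟨by rw [Lf_succ, hlen]; omega, b0.symm, fun h => by omega⟩

lemma odd_a (ξ : ℕ → A) (hξ : IsFixed ξ) (m : ℕ) : ξ (2 * m + 1) = A.a := by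
  rcases Nat.mod_two_eq_zero_or_one m with hm | hm
  · exact ((main_ind ξ hξ m).2.2 hm).1
  · have h := ((main_ind ξ hξ (m - 1)).2.2 (by omega)).2
    rwa [show 2 * (m - 1) + 3 = 2 * m + 1 from by omega] at h

lemma even_nxt (ξ : ℕ → A) (hξ : IsFixed ξ) (m : ℕ) :
    ξ (2 * m + 2) = nxt (ξ (m + 1)) := (main_ind ξ hξ m).2.1

lemma even_nxt' (ξ : ℕ → A) (hξ : IsFixed ξ) (m : ℕ) (hm : 1 ≤ m) :
    ξ (2 * m) = nxt (ξ m) := by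
  have h := even_nxt ξ hξ (m - 1)
  rwa [show 2 * (m - 1) + 2 = 2 * m from by omega,
    show m - 1 + 1 = m from by omega] at h

lemma ltr_one : ltr 1 = [A.c] := rfl

lemma ltr_succ (n : ℕ) : ltr (n + 2) = substW (ltr (n + 1)) := by
  show substW^[n + 1] [A.c] = substW (substW^[n] [A.c])
  rw [Function.iterate_succ_apply']

lemma pow_lemma (ξ : ℕ → A) (hξ : IsFixed ξ) :
    ∀ p K : ℕ, K % 2 = 1 → [ξ (2 ^ (p + 1) * K)] = ltr (p + 1) := by
  intro p
  induction p with
  | zero =>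
    intro K hK
    rw [pow_one, ltr_one]
    have h1 : ξ (2 * K) = nxt (ξ K) := even_nxt' ξ hξ K (by omega)
    have h2 : ξ K = A.a := by
      rw [show K = 2 * (K / 2) + 1 from by omega]; exact odd_a ξ hξ _
    rw [h1, h2]; rfl
  | succ p ih =>
    intro K hK
    have hM : 1 ≤ 2 ^ (p + 1) * K := Nat.one_le_iff_ne_zero.mpr (Nat.mul_ne_zero (pow_ne_zero _ two_ne_zero) (by omega))
    have hM2 : 1 ≤ 2 ^ p * K := Nat.one_le_iff_ne_zero.mpr (Nat.mul_ne_zero (pow_ne_zero _ two_ne_zero) (by omega))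
    have hxM : ξ (2 ^ (p + 1) * K) = nxt (ξ (2 ^ p * K)) := by
      have h := even_nxt' ξ hξ (2 ^ p * K) hM2
      rwa [show 2 * (2 ^ p * K) = 2 ^ (p + 1) * K from by ring] at h
    have hne : ξ (2 ^ (p + 1) * K) ≠ A.a := by rw [hxM]; exact nxt_ne_a _
    have h1 : ξ (2 ^ (p + 2) * K) = nxt (ξ (2 ^ (p + 1) * K)) := by
      have h := even_nxt' ξ hξ (2 ^ (p + 1) * K) hM
      rwa [show 2 * (2 ^ (p + 1) * K) = 2 ^ (p + 2) * K from by ring] at h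
    rw [ltr_succ, ← ih K hK, h1]
    show [nxt _] = substW [_]
    rw [show substW [ξ (2 ^ (p + 1) * K)] = subst (ξ (2 ^ (p + 1) * K)) from by
      simp [substW], subst_ne_a _ hne]

theorem stmt3 (ξ : ℕ → A) (hξ : IsFixed ξ) :
    (∀ n K : ℕ, K % 2 = 1 →
      (n = 0 → ξ (2 ^ n * K) = A.a) ∧ (1 ≤ n → [ξ (2 ^ n * K)] = ltr n)) ∧
    (∀ N : ℕ, 1 ≤ N → (ξ N = A.a ↔ N % 2 = 1)) := by
  constructor
  · intro n K hK
    constructor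
    · rintro rfl
      rw [pow_zero, one_mul, show K = 2 * (K / 2) + 1 from by omega]
      exact odd_a ξ hξ _
    · intro hn
      obtain ⟨p, rfl⟩ : ∃ p, n = p + 1 := ⟨n - 1, by omega⟩
      exact pow_lemma ξ hξ p K hK
  · intro N hN
    constructor
    · intro hA
      by_contra h
      rw [show N = 2 * (N / 2) from by omega] at hA
      rw [even_nxt' ξ hξ (N / 2) (by omega)] at hA
      exact nxt_ne_a _ hA
    · intro h
      rw [show N = 2 * (N / 2) + 1 from by omega]
      exact odd_a ξ hξ _
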